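/- Let H₁ be the three-dimensional simply connected Heisenberg group with Lie algebra spanned by orthonormal vectors X, Y, Z and bracket [X,Y] = Z, with the associated left-invariant metric. Let γ = exp(cZ) be a central element with c > 0. Then the set of lengths of closed geodesics in the free homotopy class determined by γ in any quotient containing γ is {c} ∪ {√(4πk(c − πk)) : k ∈ ℤ, 1 ≤ k < c/(2π)}; in particular, if c ≤ 2π the only period is c, and nonintegral-type lengths √(4πk(c−πk)) occur only when c > 2π. -/

import Mathlib

/-!
Along a geodesic the vertical velocity `ω` is constant and the horizontal velocity `(a, b)`
rotates with angular speed `ω`; for `ω ≠ 0` the projection to the `(x, y)`-plane runs around a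
circle of radius `√(1 - ω²) / |ω|` while `z` grows on average at rate `(1 + ω²) / (2ω)`.
Translation by `exp(cZ)` fixes `x, y` and shifts `z` by `c`, so a period `λ` forces
`2ωc = (1 + ω²)λ` and, unless the circle degenerates (`ω = 1`: the vertical line, `λ = c`),
`ωλ = 2πk`. Eliminating `ω` gives `λ² = 4πk(c - πk)`, and `ω² < 1` becomes `2πk < c`.
For `ω = 0` the geodesic is a horizontal line, which no central element maps to itself.
-/

namespace Stmt14

/-- The simply connected 3-dimensional Heisenberg group in exponential
coordinates `(x, y, z) = exp(xX + yY + zZ)`, with `[X,Y] = Z`: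
Campbell–Baker–Hausdorff multiplication. -/
noncomputable def hmul (g h : ℝ × ℝ × ℝ) : ℝ × ℝ × ℝ :=
  (g.1 + h.1, g.2.1 + h.2.1, g.2.2 + h.2.2 + (g.1 * h.2.1 - g.2.1 * h.1) / 2)

/-- A unit-speed geodesic of the left-invariant metric making `{X, Y, Z}`
orthonormal: the left-trivialized velocity `(a, b, c)` has unit norm and
satisfies the Euler–Arnold geodesic equations `a' = -cb`, `b' = ca`, `c' = 0`. -/
def IsUnitSpeedGeodesic (σ : ℝ → ℝ × ℝ × ℝ) : Prop :=
  ∃ a b c : ℝ → ℝ,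
    Differentiable ℝ (fun s => (σ s).1) ∧
    Differentiable ℝ (fun s => (σ s).2.1) ∧
    Differentiable ℝ (fun s => (σ s).2.2) ∧
    (∀ s, a s = deriv (fun t => (σ t).1) s) ∧
    (∀ s, b s = deriv (fun t => (σ t).2.1) s) ∧
    (∀ s, c s = deriv (fun t => (σ t).2.2) s
      - ((σ s).1 * b s - (σ s).2.1 * a s) / 2) ∧
    Differentiable ℝ a ∧ Differentiable ℝ b ∧ Differentiable ℝ c ∧
    (∀ s, a s ^ 2 + b s ^ 2 + c s ^ 2 = 1) ∧
    (∀ s, deriv a s = -(c s) * b s) ∧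
    (∀ s, deriv b s = c s * a s) ∧
    (∀ s, deriv c s = 0)

/-- `lam` is a period of `γ`: some unit-speed geodesic is translated by `γ`
with period `lam`. -/
def IsPeriod (γ : ℝ × ℝ × ℝ) (lam : ℝ) : Prop :=
  0 < lam ∧ ∃ σ : ℝ → ℝ × ℝ × ℝ,
    IsUnitSpeedGeodesic σ ∧ ∀ s : ℝ, hmul γ (σ s) = σ (s + lam)


open Real

lemma eq_of_hasDerivAt_zero {f : ℝ → ℝ} (hf : ∀ s, HasDerivAt f 0 s) (s : ℝ) : f s = f 0 :=
  is_const_of_deriv_eq_zero (fun t => (hf t).differentiableAt) (fun t => (hf t).deriv) s 0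

lemma hmul_central (c : ℝ) (g : ℝ × ℝ × ℝ) : hmul (0, 0, c) g = (g.1, g.2.1, g.2.2 + c) := by
  simp only [hmul, zero_add, zero_mul, sub_self, zero_div, add_zero]
  ring_nf

lemma isUnitSpeedGeodesic_iff {σ : ℝ → ℝ × ℝ × ℝ} :
    IsUnitSpeedGeodesic σ ↔ ∃ (ω : ℝ) (a b : ℝ → ℝ),
      (∀ s, HasDerivAt (fun t => (σ t).1) (a s) s) ∧
      (∀ s, HasDerivAt (fun t => (σ t).2.1) (b s) s) ∧
      (∀ s, HasDerivAt (fun t => (σ t).2.2) (ω + ((σ s).1 * b s - (σ s).2.1 * a s) / 2) s) ∧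
      (∀ s, HasDerivAt a (-ω * b s) s) ∧ (∀ s, HasDerivAt b (ω * a s) s) ∧
      ∀ s, a s ^ 2 + b s ^ 2 + ω ^ 2 = 1 := by
  constructor
  · rintro ⟨a, b, w, hx, hy, hz, ha, hb, hw, hda, hdb, hdw, hnorm, ha', hb', hw'⟩
    have hw_const : ∀ s, w s = w 0 := fun s => is_const_of_deriv_eq_zero hdw hw' s 0
    refine ⟨w 0, a, b, fun s => ?_, fun s => ?_, fun s => ?_, fun s => ?_, fun s => ?_,
      fun s => hw_const s ▸ hnorm s⟩
    · exact ha s ▸ (hx s).hasDerivAt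
    · exact hb s ▸ (hy s).hasDerivAt
    · refine (hz s).hasDerivAt.congr_deriv ?_
      rw [← hw_const s, hw s]
      ring
    · exact hw_const s ▸ ha' s ▸ (hda s).hasDerivAt
    · exact hw_const s ▸ hb' s ▸ (hdb s).hasDerivAt
  · rintro ⟨ω, a, b, hx, hy, hz, ha, hb, hnorm⟩
    refine ⟨a, b, fun _ => ω, fun s => (hx s).differentiableAt, fun s => (hy s).differentiableAt,
      fun s => (hz s).differentiableAt, fun s => (hx s).deriv.symm, fun s => (hy s).deriv.symm,
      fun s => ?_, fun s => (ha s).differentiableAt, fun s => (hb s).differentiableAt,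
      differentiable_const ω, hnorm, fun s => (ha s).deriv, fun s => (hb s).deriv,
      fun s => deriv_const s ω⟩
    rw [(hz s).deriv]
    ring

/-- The geodesic through the origin whose left-trivialized velocity has vertical component `ω`:
it winds around the circle of radius `√(1 - ω²) / |ω|` about the `z`-axis. -/
noncomputable def helix (ω s : ℝ) : ℝ × ℝ × ℝ :=
  (√(1 - ω ^ 2) / ω * sin (ω * s), -(√(1 - ω ^ 2) / ω * cos (ω * s)), (1 + ω ^ 2) / (2 * ω) * s)

lemma helix_isUnitSpeedGeodesic {ω : ℝ} (hω : ω ≠ 0) (hω1 : ω ^ 2 ≤ 1) :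
    IsUnitSpeedGeodesic (helix ω) := by
  set r := √(1 - ω ^ 2)
  have hr : r ^ 2 = 1 - ω ^ 2 := sq_sqrt (by linarith)
  have hlin : ∀ s, HasDerivAt (fun t => ω * t) ω s := fun _ => hasDerivAt_const_mul ω
  refine isUnitSpeedGeodesic_iff.2 ⟨ω, fun s => r * cos (ω * s), fun s => r * sin (ω * s),
    fun s => ?_, fun s => ?_, fun s => ?_, fun s => ?_, fun s => ?_, fun s => ?_⟩
  · exact (((hlin s).sin).const_mul (r / ω)).congr_deriv (by field_simp)
  · exact (((hlin s).cos).const_mul (r / ω)).neg.congr_deriv (by field_simp)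
  · refine (hasDerivAt_const_mul ((1 + ω ^ 2) / (2 * ω))).congr_deriv ?_
    simp only [helix]
    field_simp
    linear_combination (-r ^ 2) * sin_sq_add_cos_sq (ω * s) - hr
  · exact (((hlin s).cos).const_mul r).congr_deriv (by ring)
  · exact (((hlin s).sin).const_mul r).congr_deriv (by ring)
  · linear_combination r ^ 2 * sin_sq_add_cos_sq (ω * s) + hr

lemma hmul_central_helix {ω c lam : ℝ} (hω : ω ≠ 0) (hz : 2 * ω * c = (1 + ω ^ 2) * lam)
    (hrot : ω ^ 2 = 1 ∨ ∃ k : ℤ, ω * lam = k * (2 * π)) (s : ℝ) :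
    hmul (0, 0, c) (helix ω s) = helix ω (s + lam) := by
  have hz' : (1 + ω ^ 2) / (2 * ω) * (s + lam) = (1 + ω ^ 2) / (2 * ω) * s + c := by
    field_simp
    linear_combination -hz
  rw [hmul_central]
  simp only [helix, hz', Prod.mk.injEq, and_true]
  rcases hrot with hω1 | ⟨k, hk⟩
  · simp [hω1]
  · rw [mul_add, hk, sin_add_int_mul_two_pi, cos_add_int_mul_two_pi]
    exact ⟨rfl, rfl⟩

lemma isPeriod_helix {ω c lam : ℝ} (hω : ω ≠ 0) (hω1 : ω ^ 2 ≤ 1) (hlam : 0 < lam)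
    (hz : 2 * ω * c = (1 + ω ^ 2) * lam) (hrot : ω ^ 2 = 1 ∨ ∃ k : ℤ, ω * lam = k * (2 * π)) :
    IsPeriod (0, 0, c) lam :=
  ⟨hlam, helix ω, helix_isUnitSpeedGeodesic hω hω1, hmul_central_helix hω hz hrot⟩

section GeodesicEquations

variable {x y z a b : ℝ → ℝ} {ω : ℝ}

lemma eq_rotation_of_hasDerivAt (ha : ∀ s, HasDerivAt a (-ω * b s) s)
    (hb : ∀ s, HasDerivAt b (ω * a s) s) (s : ℝ) :
    a s = a 0 * cos (ω * s) - b 0 * sin (ω * s) ∧ b s = a 0 * sin (ω * s) + b 0 * cos (ω * s) := by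
  have hlin : ∀ t, HasDerivAt (fun t => ω * t) ω t := fun _ => hasDerivAt_const_mul ω
  have hu := eq_of_hasDerivAt_zero (f := fun t => a t * cos (ω * t) + b t * sin (ω * t))
    (fun t => (((ha t).mul (hlin t).cos).add ((hb t).mul (hlin t).sin)).congr_deriv (by ring)) s
  have hv := eq_of_hasDerivAt_zero (f := fun t => b t * cos (ω * t) - a t * sin (ω * t))
    (fun t => (((hb t).mul (hlin t).cos).sub ((ha t).mul (hlin t).sin)).congr_deriv (by ring)) s
  simp only [mul_zero, cos_zero, sin_zero, mul_one, add_zero, sub_zero] at hu hv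
  constructor
  · linear_combination cos (ω * s) * hu - sin (ω * s) * hv - a s * sin_sq_add_cos_sq (ω * s)
  · linear_combination sin (ω * s) * hu + cos (ω * s) * hv - b s * sin_sq_add_cos_sq (ω * s)

lemma sub_div_eq_of_hasDerivAt {u v : ℝ → ℝ} (hω : ω ≠ 0) (hx : ∀ s, HasDerivAt x (u s) s)
    (hv : ∀ s, HasDerivAt v (ω * u s) s) (s : ℝ) : x s - v s / ω = x 0 - v 0 / ω :=
  eq_of_hasDerivAt_zero
    (fun t => ((hx t).sub ((hv t).div_const ω)).congr_deriv (by field_simp; ring)) s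

/-- `(x, y)` runs around the circle with centre `(p, q)`, so that
`x b - y a = p y' - q x' + (1 - ω²) / ω`: up to a bounded term, `z` grows linearly. -/
lemma vertical_drift {p q : ℝ} (hω : ω ≠ 0) (hx : ∀ s, HasDerivAt x (a s) s)
    (hy : ∀ s, HasDerivAt y (b s) s) (hz : ∀ s, HasDerivAt z (ω + (x s * b s - y s * a s) / 2) s)
    (hnorm : ∀ s, a s ^ 2 + b s ^ 2 + ω ^ 2 = 1)
    (hp : ∀ s, x s = p + b s / ω) (hq : ∀ s, y s = q - a s / ω) (s : ℝ) :
    z s - (1 + ω ^ 2) / (2 * ω) * s - (p * y s - q * x s) / 2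
      = z 0 - (p * y 0 - q * x 0) / 2 := by
  have hd : ∀ t, HasDerivAt
      (fun t => z t - (1 + ω ^ 2) / (2 * ω) * t - (p * y t - q * x t) / 2) 0 t :=
    fun t => (((hz t).sub (hasDerivAt_const_mul _)).sub
      ((((hy t).const_mul p).sub ((hx t).const_mul q)).div_const 2)).congr_deriv (by
        rw [hp t, hq t]
        field_simp
        linear_combination hnorm t)
  simpa using eq_of_hasDerivAt_zero hd s

lemma ne_zero_of_closed {lam : ℝ} (hx : ∀ s, HasDerivAt x (a s) s)
    (hy : ∀ s, HasDerivAt y (b s) s) (ha : ∀ s, HasDerivAt a (-ω * b s) s)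
    (hb : ∀ s, HasDerivAt b (ω * a s) s) (hnorm : ∀ s, a s ^ 2 + b s ^ 2 + ω ^ 2 = 1)
    (hlam : lam ≠ 0) (hxl : x lam = x 0) (hyl : y lam = y 0) : ω ≠ 0 := by
  rintro rfl
  have hab : ∀ s, a s = a 0 ∧ b s = b 0 := fun s => by
    simpa using eq_rotation_of_hasDerivAt ha hb s
  have hxa := eq_of_hasDerivAt_zero
    (fun t => ((hx t).sub (hasDerivAt_const_mul (a 0))).congr_deriv (by simp [(hab t).1])) lam
  have hyb := eq_of_hasDerivAt_zero
    (fun t => ((hy t).sub (hasDerivAt_const_mul (b 0))).congr_deriv (by simp [(hab t).2])) lam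
  have ha0 : a 0 = 0 := by simpa [hxl, hlam] using hxa
  have hb0 : b 0 = 0 := by simpa [hyl, hlam] using hyb
  simpa [ha0, hb0] using hnorm 0

theorem helix_relations_of_closed {c lam : ℝ} (hx : ∀ s, HasDerivAt x (a s) s)
    (hy : ∀ s, HasDerivAt y (b s) s) (hz : ∀ s, HasDerivAt z (ω + (x s * b s - y s * a s) / 2) s)
    (ha : ∀ s, HasDerivAt a (-ω * b s) s) (hb : ∀ s, HasDerivAt b (ω * a s) s)
    (hnorm : ∀ s, a s ^ 2 + b s ^ 2 + ω ^ 2 = 1) (hlam : lam ≠ 0)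
    (hxl : x lam = x 0) (hyl : y lam = y 0) (hzl : z lam = z 0 + c) :
    ω ≠ 0 ∧ ω ^ 2 ≤ 1 ∧ 2 * ω * c = (1 + ω ^ 2) * lam ∧
      (ω ^ 2 = 1 ∨ ∃ k : ℤ, ω * lam = k * (2 * π)) := by
  have hω := ne_zero_of_closed hx hy ha hb hnorm hlam hxl hyl
  have hp := sub_div_eq_of_hasDerivAt hω hx hb
  have hq := sub_div_eq_of_hasDerivAt (v := fun t => -a t) hω hy
    (fun s => (ha s).neg.congr_deriv (by ring))
  have hdrift := vertical_drift (p := x 0 - b 0 / ω) (q := y 0 + a 0 / ω) hω hx hy hz hnorm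
    (fun s => by linear_combination hp s) (fun s => by linear_combination hq s) lam
  refine ⟨hω, by nlinarith [hnorm 0], ?_, ?_⟩
  · rw [hxl, hyl, hzl] at hdrift
    field_simp at hdrift
    linear_combination hdrift
  · refine or_iff_not_imp_left.2 fun hω1 => ?_
    have hal : a lam = a 0 := by
      have := hq lam
      rw [hyl] at this
      field_simp at this
      linarith
    have hbl : b lam = b 0 := by
      have := hp lam
      rw [hxl] at this
      field_simp at this
      linarith
    obtain ⟨hal', hbl'⟩ := eq_rotation_of_hasDerivAt ha hb lam
    have hr : a 0 ^ 2 + b 0 ^ 2 ≠ 0 := fun h => hω1 (by linarith [hnorm 0])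
    have hcos : (a 0 ^ 2 + b 0 ^ 2) * (cos (ω * lam) - 1) = 0 := by
      linear_combination a 0 * (hal'.symm.trans hal) + b 0 * (hbl'.symm.trans hbl)
    obtain ⟨k, hk⟩ := (cos_eq_one_iff _).1 (by linarith [(mul_eq_zero.1 hcos).resolve_left hr])
    exact ⟨k, hk.symm⟩

end GeodesicEquations

theorem isPeriod_central_iff (c lam : ℝ) :
    IsPeriod (0, 0, c) lam ↔ 0 < lam ∧ ∃ ω : ℝ, ω ≠ 0 ∧ ω ^ 2 ≤ 1 ∧
      2 * ω * c = (1 + ω ^ 2) * lam ∧ (ω ^ 2 = 1 ∨ ∃ k : ℤ, ω * lam = k * (2 * π)) := by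
  constructor
  · rintro ⟨hlam, σ, hσ, hper⟩
    obtain ⟨ω, a, b, hx, hy, hz, ha, hb, hnorm⟩ := isUnitSpeedGeodesic_iff.1 hσ
    have hclosed := hper 0
    rw [hmul_central, zero_add] at hclosed
    simp only [Prod.ext_iff] at hclosed
    exact ⟨hlam, ω, helix_relations_of_closed hx hy hz ha hb hnorm hlam.ne'
      hclosed.1.symm hclosed.2.1.symm hclosed.2.2.symm⟩
  · rintro ⟨hlam, ω, hω, hω1, hz, hrot⟩
    exact isPeriod_helix hω hω1 hlam hz hrot

lemma eq_or_eq_sqrt_of_helix_relations {c lam ω : ℝ} (hc : 0 < c) (hlam : 0 < lam)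
    (hω1 : ω ^ 2 ≤ 1) (hz : 2 * ω * c = (1 + ω ^ 2) * lam)
    (hrot : ω ^ 2 = 1 ∨ ∃ k : ℤ, ω * lam = k * (2 * π)) :
    lam = c ∨ ∃ k : ℤ, 1 ≤ k ∧ (k : ℝ) < c / (2 * π) ∧ lam = √(4 * π * k * (c - π * k)) := by
  have hω : 0 < ω := by nlinarith [mul_pos (by positivity : (0 : ℝ) < 1 + ω ^ 2) hlam]
  by_cases hω1' : ω ^ 2 = 1
  · left
    have : ω = 1 := by nlinarith
    subst this
    linarith
  obtain ⟨k, hk⟩ := hrot.resolve_left hω1'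
  have hkey : ω ^ 2 * (c - π * k) = π * k := by
    linear_combination ω / 2 * hz + (1 + ω ^ 2) / 2 * hk
  have hπk : 0 < π * k := by nlinarith [pi_pos]
  have hk1 : 1 ≤ k := by
    have : (0 : ℝ) < k := pos_of_mul_pos_right hπk pi_pos.le
    exact_mod_cast this
  have hcπk : 0 < c - π * k := by nlinarith
  refine Or.inr ⟨k, hk1, ?_, ?_⟩
  · have hlt : ω ^ 2 * (c - π * k) < c - π * k :=
      mul_lt_of_lt_one_left hcπk (lt_of_le_of_ne hω1 hω1')
    rw [lt_div_iff₀ (by positivity)]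
    linarith
  · have hsq : π * k * lam ^ 2 = π * k * (4 * π * k * (c - π * k)) := by
      linear_combination -lam ^ 2 * hkey + (c - π * k) * (ω * lam + k * (2 * π)) * hk
    rw [← mul_left_cancel₀ hπk.ne' hsq, sqrt_sq hlam.le]

lemma helix_relations_of_eq_sqrt {c : ℝ} (k : ℤ) (hk1 : 1 ≤ k) (hk : (k : ℝ) < c / (2 * π)) :
    0 < √(4 * π * k * (c - π * k)) ∧ ∃ ω : ℝ, ω ≠ 0 ∧ ω ^ 2 ≤ 1 ∧
      2 * ω * c = (1 + ω ^ 2) * √(4 * π * k * (c - π * k)) ∧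
      (ω ^ 2 = 1 ∨ ∃ n : ℤ, ω * √(4 * π * k * (c - π * k)) = n * (2 * π)) := by
  have hπk : 0 < π * k := mul_pos pi_pos (by exact_mod_cast hk1)
  rw [lt_div_iff₀ two_pi_pos] at hk
  have hcπk : 0 < c - π * k := by linarith
  set lam := √(4 * π * k * (c - π * k))
  set ω := √(π * k / (c - π * k))
  have hω : 0 < ω := sqrt_pos.2 (by positivity)
  have hω2 : ω ^ 2 = π * k / (c - π * k) := sq_sqrt (by positivity)
  have hωlam : ω * lam = k * (2 * π) := by
    rw [← sqrt_mul (by positivity), ← sqrt_sq (by positivity : (0 : ℝ) ≤ k * (2 * π))]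
    congr 1
    field_simp
    ring
  refine ⟨sqrt_pos.2 (by positivity), ω, hω.ne', ?_, ?_, Or.inr ⟨k, hωlam⟩⟩
  · rw [hω2, div_le_one hcπk]
    linarith
  · refine mul_left_cancel₀ hω.ne' ?_
    have hkey : ω ^ 2 * (c - π * k) = π * k := by
      rw [hω2]
      field_simp
    linear_combination 2 * hkey - (1 + ω ^ 2) * hωlam

open Real in
/-- for the central element `γ = exp(cZ)`, `c > 0`, the set of
periods is `{c} ∪ {√(4πk(c − πk)) : k ∈ ℤ, 1 ≤ k < c/(2π)}`; in particular for
`c ≤ 2π` the only period is `c`. -/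
theorem stmt14 (c : ℝ) (hc : 0 < c) :
    ({lam | IsPeriod (0, 0, c) lam} =
      {c} ∪ {l | ∃ k : ℤ, 1 ≤ k ∧ (k : ℝ) < c / (2 * π) ∧
        l = Real.sqrt (4 * π * k * (c - π * k))}) ∧
    (c ≤ 2 * π → {lam | IsPeriod (0, 0, c) lam} = {c}) := by
  have hperiods : {lam | IsPeriod (0, 0, c) lam} = {c} ∪ {l | ∃ k : ℤ, 1 ≤ k ∧
      (k : ℝ) < c / (2 * π) ∧ l = Real.sqrt (4 * π * k * (c - π * k))} := by
    ext lam
    simp only [Set.mem_ofPred_eq, Set.mem_union, Set.mem_singleton_iff, isPeriod_central_iff]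
    constructor
    · rintro ⟨hlam, ω, -, hω1, hz, hrot⟩
      exact eq_or_eq_sqrt_of_helix_relations hc hlam hω1 hz hrot
    · rintro (rfl | ⟨k, hk1, hk, rfl⟩)
      · exact ⟨hc, 1, one_ne_zero, le_of_eq (one_pow 2), by ring, Or.inl (one_pow 2)⟩
      · exact helix_relations_of_eq_sqrt k hk1 hk
  refine ⟨hperiods, fun hc2π => ?_⟩
  rw [hperiods, Set.union_eq_left]
  rintro _ ⟨k, hk1, hk, -⟩
  have : c / (2 * π) ≤ 1 := (div_le_one (by positivity)).2 hc2π
  have : (1 : ℝ) ≤ k := by exact_mod_cast hk1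
  linarith

end Stmt14
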